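/- arXiv:1005.2889 — 2 statements merged into one kernel-verified Lean document; each statement's English description precedes it below -/
import Mathlib

section
/- Let (U₀, E_{1,0}, ψ_{1,0}) be the unique solution of the half-line Schrödinger–Poisson problem. Then there exist constants a, b > 0 such that for all sufficiently large M > 0, ‖ψ_{1,0}‖_{L²(M,∞)} ≤ a e^{−bM}; in particular, with M_ε = 1/ε, this bound holds for all sufficiently small ε > 0. -/
open MeasureTheory Set Filter

noncomputable section

/-- Membership in `S_∞`: `ψ ∈ H¹(0,∞)` (with derivative `ψ'`), `ψ(0) = 0`,
`∫₀^∞ ψ² = 1`. -/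
def MemSinf (ψ ψ' : ℝ → ℝ) : Prop :=
  (∀ ξ, HasDerivAt ψ (ψ' ξ) ξ) ∧
  IntegrableOn (fun ξ => (ψ ξ) ^ 2) (Ioi 0) ∧
  IntegrableOn (fun ξ => (ψ' ξ) ^ 2) (Ioi 0) ∧
  ψ 0 = 0 ∧
  (∫ ξ in Ioi (0 : ℝ), (ψ ξ) ^ 2) = 1

/-- The energy `J_U(ψ) = ∫₀^∞ |ψ′|² + ∫₀^∞ U ψ²`. -/
def Jfun (U ψ ψ' : ℝ → ℝ) : ℝ :=
  (∫ ξ in Ioi (0 : ℝ), (ψ' ξ) ^ 2) + ∫ ξ in Ioi (0 : ℝ), U ξ * (ψ ξ) ^ 2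

/-- The fundamental mode `E₁^∞[U] = inf_{ψ ∈ S_∞} J_U(ψ)`. -/
def E1inf (U : ℝ → ℝ) : ℝ :=
  sInf {e : ℝ | ∃ ψ ψ' : ℝ → ℝ, MemSinf ψ ψ' ∧ Jfun U ψ ψ' = e}

/-- Membership in `Ḣ¹₀(ℝ⁺)`: `U` with derivative `U' ∈ L²(0,∞)`, `U(0) = 0`,
`U ≥ 0` on `[0,∞)`. -/
def MemH1dot (U U' : ℝ → ℝ) : Prop :=
  (∀ ξ, HasDerivAt U (U' ξ) ξ) ∧
  IntegrableOn (fun ξ => (U' ξ) ^ 2) (Ioi 0) ∧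
  U 0 = 0 ∧
  ∀ ξ ∈ Ici (0 : ℝ), 0 ≤ U ξ

/-- The functional `J₀(U) = (1/2)∫₀^∞ |U′|² − E₁^∞[U]`. -/
def J0fun (U U' : ℝ → ℝ) : ℝ :=
  (1 / 2) * (∫ ξ in Ioi (0 : ℝ), (U' ξ) ^ 2) - E1inf U

/-- A solution `(U, E, ψ)` of the half-line Schrödinger–Poisson problem. -/
def SPsol (U U' ψ ψ' : ℝ → ℝ) (E : ℝ) : Prop :=
  MemH1dot U U' ∧ MemSinf ψ ψ' ∧
  (∀ ξ ∈ Ioi (0 : ℝ), 0 < ψ ξ) ∧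
  (∀ ξ ∈ Ioi (0 : ℝ), HasDerivAt ψ' ((U ξ - E) * ψ ξ) ξ) ∧
  E = E1inf U ∧
  (∀ ξ ∈ Ioi (0 : ℝ), HasDerivAt U' (-(ψ ξ) ^ 2) ξ)

/-!
Since `U'' = -ψ² ≤ 0` and `U' ∈ L²`, the derivative `U'` is nonnegative and `U` is
nondecreasing on `(0, ∞)`. It must exceed `E` somewhere: otherwise `ψ'' = (U - E) ψ ≤ 0`
makes the positive `ψ` concave, hence nondecreasing, which is incompatible with `ψ ∈ L²`.
Past a point `a` where `U - E ≥ b² > 0`, `ψ` is convex, hence (again by `ψ ∈ L²`)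
nonincreasing. Then `ψ' + b ψ` is bounded above and `(ψ' + b ψ)' - b (ψ' + b ψ) =
(U - E - b²) ψ ≥ 0`, which forces `ψ' + b ψ ≤ 0`, i.e. `ψ(x) ≤ ψ(a) e^{-b (x - a)}`.
Squaring and integrating gives the `L²` tail bound.
-/

lemma monotoneOn_Ici_of_hasDerivAt {f f' : ℝ → ℝ} {a : ℝ}
    (hf : ∀ x ∈ Ici a, HasDerivAt f (f' x) x) (hf' : ∀ x ∈ Ioi a, 0 ≤ f' x) :
    MonotoneOn f (Ici a) :=
  monotoneOn_of_hasDerivWithinAt_nonneg (convex_Ici a)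
    (fun x hx => (hf x hx).continuousAt.continuousWithinAt)
    (by simpa only [interior_Ici] using
      fun x hx => (hf x (Ioi_subset_Ici_self hx)).hasDerivWithinAt)
    (by simpa only [interior_Ici])

lemma antitoneOn_Ici_of_hasDerivAt {f f' : ℝ → ℝ} {a : ℝ}
    (hf : ∀ x ∈ Ici a, HasDerivAt f (f' x) x) (hf' : ∀ x ∈ Ioi a, f' x ≤ 0) :
    AntitoneOn f (Ici a) :=
  antitoneOn_of_hasDerivWithinAt_nonpos (convex_Ici a)
    (fun x hx => (hf x hx).continuousAt.continuousWithinAt)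
    (by simpa only [interior_Ici] using
      fun x hx => (hf x (Ioi_subset_Ici_self hx)).hasDerivWithinAt)
    (by simpa only [interior_Ici])

lemma hasDerivAt_exp_mul_mul {f : ℝ → ℝ} {f' c x : ℝ} (hf : HasDerivAt f f' x) :
    HasDerivAt (fun y => Real.exp (c * y) * f y) (Real.exp (c * x) * (f' + c * f x)) x := by
  have hexp : HasDerivAt (fun y => Real.exp (c * y)) (Real.exp (c * x) * c) x := by
    simpa using ((hasDerivAt_id x).const_mul c).exp
  exact (hexp.mul hf).congr_deriv (by ring)

lemma MonotoneOn.nonpos_of_integrableOn_sq {f : ℝ → ℝ} {a : ℝ} (hf : MonotoneOn f (Ici a))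
    (hint : IntegrableOn (fun x => f x ^ 2) (Ioi a)) : f a ≤ 0 := by
  by_contra! hpos
  have hconst : IntegrableOn (fun _ => f a ^ 2) (Ioi a) := by
    refine hint.mono' aestronglyMeasurable_const ?_
    filter_upwards [ae_restrict_mem measurableSet_Ioi] with x hx
    have hax : f a ≤ f x := hf self_mem_Ici (mem_Ici.2 (le_of_lt hx)) (le_of_lt hx)
    rw [Real.norm_eq_abs, abs_of_nonneg (sq_nonneg _)]
    gcongr
  rw [integrableOn_const_iff, Real.volume_Ioi] at hconst
  simp [hpos.ne'] at hconst

/-- A concave function lies below its tangent lines, and a tangent line of negative slope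
eventually becomes negative. -/
lemma deriv_nonneg_of_antitoneOn_of_nonneg {f f' : ℝ → ℝ} {a : ℝ}
    (hf : ∀ x ∈ Ici a, HasDerivAt f (f' x) x) (hf' : AntitoneOn f' (Ici a))
    (hnonneg : ∀ x ∈ Ici a, 0 ≤ f x) : 0 ≤ f' a := by
  by_contra! hneg
  have htangent : AntitoneOn (fun x => f x - f' a * x) (Ici a) := by
    refine antitoneOn_Ici_of_hasDerivAt (f' := fun x => f' x - f' a)
      (fun x hx => (hf x hx).sub (by simpa using (hasDerivAt_id x).const_mul (f' a))) ?_
    intro x hx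
    linarith [hf' self_mem_Ici (mem_Ici.2 hx.le) hx.le]
  set x := a - (f a + 1) / f' a
  have hax : a ≤ x := by
    have : (f a + 1) / f' a < 0 := div_neg_of_pos_of_neg (by linarith [hnonneg a self_mem_Ici]) hneg
    linarith
  have hfx : f x - f' a * x ≤ f a - f' a * a := htangent self_mem_Ici (mem_Ici.2 hax) hax
  have hfx' : f x ≤ -1 := by
    have : f' a * x = f' a * a - (f a + 1) := by
      have := hneg.ne
      simp only [x]; field_simp
    linarith
  linarith [hnonneg x (mem_Ici.2 hax)]

lemma nonpos_of_mul_le_deriv_of_bddAbove {h h' : ℝ → ℝ} {a b : ℝ} (hb : 0 < b)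
    (hh : ∀ x ∈ Ici a, HasDerivAt h (h' x) x) (hle : ∀ x ∈ Ici a, b * h x ≤ h' x)
    (hbdd : BddAbove (h '' Ici a)) : ∀ x ∈ Ici a, h x ≤ 0 := by
  intro x₀ hx₀
  by_contra! hpos
  have hmono : MonotoneOn (fun x => Real.exp (-b * x) * h x) (Ici a) := by
    refine monotoneOn_Ici_of_hasDerivAt (fun x hx => hasDerivAt_exp_mul_mul (hh x hx)) ?_
    intro x hx
    have := hle x (mem_Ici.2 hx.le)
    exact mul_nonneg (Real.exp_pos _).le (by linarith)
  have hgrowth : ∀ x ∈ Ici x₀, Real.exp (b * (x - x₀)) * h x₀ ≤ h x := by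
    intro x hx
    have hmx := hmono hx₀ (mem_Ici.2 (hx₀.trans hx)) hx
    have hsplit : Real.exp (b * (x - x₀)) = Real.exp (b * x) * Real.exp (-b * x₀) := by
      rw [← Real.exp_add]; ring_nf
    have hcancel : Real.exp (b * x) * Real.exp (-b * x) = 1 := by
      rw [← Real.exp_add]; simp
    calc Real.exp (b * (x - x₀)) * h x₀
        = Real.exp (b * x) * (Real.exp (-b * x₀) * h x₀) := by rw [hsplit]; ring
      _ ≤ Real.exp (b * x) * (Real.exp (-b * x) * h x) :=
          mul_le_mul_of_nonneg_left hmx (Real.exp_pos _).le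
      _ = h x := by rw [← mul_assoc, hcancel, one_mul]
  have hlin : Tendsto (fun x => b * (x - x₀)) atTop atTop := by
    simpa only [id, sub_eq_add_neg] using
      (tendsto_atTop_add_const_right atTop (-x₀) tendsto_id).const_mul_atTop hb
  have htends : Tendsto (fun x => Real.exp (b * (x - x₀)) * h x₀) atTop atTop :=
    (Real.tendsto_exp_atTop.comp hlin).atTop_mul_const hpos
  obtain ⟨B, hB⟩ := hbdd
  obtain ⟨x, hxB, hxx₀⟩ :=
    ((htends.eventually_gt_atTop B).and (eventually_ge_atTop x₀)).exists
  exact (hxB.trans_le (hgrowth x hxx₀)).not_ge (hB ⟨x, hx₀.trans hxx₀, rfl⟩)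

lemma le_exp_mul_of_deriv_add_mul_nonpos {f f' : ℝ → ℝ} {a b : ℝ}
    (hf : ∀ x ∈ Ici a, HasDerivAt f (f' x) x) (hle : ∀ x ∈ Ici a, f' x + b * f x ≤ 0) :
    ∀ x ∈ Ici a, f x ≤ f a * Real.exp (b * a) * Real.exp (-b * x) := by
  have hanti : AntitoneOn (fun x => Real.exp (b * x) * f x) (Ici a) :=
    antitoneOn_Ici_of_hasDerivAt (fun x hx => hasDerivAt_exp_mul_mul (hf x hx))
      fun x hx => mul_nonpos_of_nonneg_of_nonpos (Real.exp_pos _).le (hle x (mem_Ici.2 hx.le))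
  intro x hx
  have hcancel : Real.exp (b * x) * Real.exp (-b * x) = 1 := by
    rw [← Real.exp_add]; simp
  calc f x = Real.exp (b * x) * f x * Real.exp (-b * x) := by
        rw [mul_comm (Real.exp _) (f x), mul_assoc, hcancel, mul_one]
    _ ≤ Real.exp (b * a) * f a * Real.exp (-b * x) :=
        mul_le_mul_of_nonneg_right (hanti self_mem_Ici hx hx) (Real.exp_pos _).le
    _ = f a * Real.exp (b * a) * Real.exp (-b * x) := by ring

lemma sqrt_integral_sq_Ioi_le_of_abs_le_exp {f : ℝ → ℝ} {b C M : ℝ} (hb : 0 < b)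
    (hf : ∀ x ∈ Ioi M, |f x| ≤ C * Real.exp (-b * x)) :
    Real.sqrt (∫ x in Ioi M, f x ^ 2) ≤ C / Real.sqrt (2 * b) * Real.exp (-b * M) := by
  have hsq : ∀ x ∈ Ioi M, f x ^ 2 ≤ C ^ 2 * Real.exp (-(2 * b) * x) := by
    intro x hx
    calc f x ^ 2 = |f x| ^ 2 := (sq_abs _).symm
      _ ≤ (C * Real.exp (-b * x)) ^ 2 := by gcongr; exact hf x hx
      _ = C ^ 2 * Real.exp (-(2 * b) * x) := by
        rw [mul_pow, ← Real.exp_nat_mul]; ring_nf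
  have hint : ∫ x in Ioi M, f x ^ 2 ≤ C ^ 2 * (Real.exp (-(2 * b) * M) / (2 * b)) := by
    have hexp : ∫ x in Ioi M, Real.exp (-(2 * b) * x) = Real.exp (-(2 * b) * M) / (2 * b) := by
      rw [integral_exp_mul_Ioi (by linarith)]; ring
    rw [← hexp, ← integral_const_mul]
    refine integral_mono_of_nonneg (Eventually.of_forall fun x => sq_nonneg (f x))
      ((integrableOn_exp_mul_Ioi (by linarith) M).const_mul _) ?_
    filter_upwards [ae_restrict_mem measurableSet_Ioi] with x hx
    exact hsq x hx
  have hC : 0 ≤ C := by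
    have := hf (M + 1) (by simp)
    exact nonneg_of_mul_nonneg_left ((abs_nonneg _).trans this) (Real.exp_pos _)
  have hrhs : C ^ 2 * (Real.exp (-(2 * b) * M) / (2 * b)) =
      (C / Real.sqrt (2 * b) * Real.exp (-b * M)) ^ 2 := by
    rw [mul_pow, div_pow, Real.sq_sqrt (by linarith), ← Real.exp_nat_mul]
    ring_nf
  rw [hrhs] at hint
  calc Real.sqrt (∫ x in Ioi M, f x ^ 2)
      ≤ Real.sqrt ((C / Real.sqrt (2 * b) * Real.exp (-b * M)) ^ 2) := Real.sqrt_le_sqrt hint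
    _ = C / Real.sqrt (2 * b) * Real.exp (-b * M) := Real.sqrt_sq (by positivity)

namespace SPsol

variable {U U' ψ ψ' : ℝ → ℝ} {E : ℝ}

lemma monotoneOn_potential (h : SPsol U U' ψ ψ' E) : MonotoneOn U (Ioi 0) := by
  obtain ⟨⟨hU, hU'sq, -⟩, -, -, -, -, hU''⟩ := h
  have hU'nonneg : ∀ x ∈ Ioi (0 : ℝ), 0 ≤ U' x := by
    intro x hx
    have hanti : AntitoneOn U' (Ici x) :=
      antitoneOn_Ici_of_hasDerivAt (fun y hy => hU'' y (mem_Ioi.2 (lt_of_lt_of_le hx hy)))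
        fun y _ => neg_nonpos.2 (sq_nonneg _)
    have := hanti.neg.nonpos_of_integrableOn_sq
      (by simpa only [Pi.neg_apply, neg_sq] using hU'sq.mono_set (Ioi_subset_Ioi hx.le))
    simpa using this
  exact monotoneOn_of_hasDerivWithinAt_nonneg (convex_Ioi 0)
    (fun x _ => (hU x).continuousAt.continuousWithinAt)
    (fun x _ => (hU x).hasDerivWithinAt) (by simpa only [interior_Ioi] using hU'nonneg)

lemma exists_energy_lt_potential (h : SPsol U U' ψ ψ' E) : ∃ x ∈ Ioi 0, E < U x := by
  obtain ⟨-, ⟨hψ, hψsq, -⟩, hψpos, hψ'', -⟩ := h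
  by_contra! hUE
  have hψ'nonneg : ∀ x ∈ Ioi (1 : ℝ), 0 ≤ ψ' x := by
    intro x hx
    have hx0 : ∀ y ∈ Ici x, 0 < y := fun y hy => by linarith [mem_Ioi.1 hx, mem_Ici.1 hy]
    refine deriv_nonneg_of_antitoneOn_of_nonneg (fun y _ => hψ y) ?_
      fun y hy => (hψpos y (hx0 y hy)).le
    refine antitoneOn_Ici_of_hasDerivAt (fun y hy => hψ'' y (hx0 y hy)) fun y hy => ?_
    exact mul_nonpos_of_nonpos_of_nonneg (by linarith [hUE y (hx0 y (mem_Ici.2 hy.le))])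
      (hψpos y (hx0 y (mem_Ici.2 hy.le))).le
  have hmono : MonotoneOn ψ (Ici 1) :=
    monotoneOn_Ici_of_hasDerivAt (fun y _ => hψ y) hψ'nonneg
  have := hmono.nonpos_of_integrableOn_sq (hψsq.mono_set (Ioi_subset_Ioi zero_le_one))
  linarith [hψpos 1 (mem_Ioi.2 one_pos)]

lemma deriv_nonpos_of_energy_le (h : SPsol U U' ψ ψ' E) {a : ℝ} (ha : 0 < a)
    (hE : ∀ x ∈ Ici a, E ≤ U x) : ∀ x ∈ Ici a, ψ' x ≤ 0 := by
  obtain ⟨-, ⟨hψ, hψsq, -⟩, hψpos, hψ'', -⟩ := h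
  have hpos : ∀ x ∈ Ici a, 0 < x := fun x hx => lt_of_lt_of_le ha hx
  have hψ'mono : MonotoneOn ψ' (Ici a) :=
    monotoneOn_Ici_of_hasDerivAt (fun x hx => hψ'' x (hpos x hx)) fun x hx =>
      mul_nonneg (by linarith [hE x (mem_Ici.2 hx.le)]) (hψpos x (hpos x (mem_Ici.2 hx.le))).le
  intro x hx
  by_contra! hψ'x
  have hmono : MonotoneOn ψ (Ici x) :=
    monotoneOn_Ici_of_hasDerivAt (fun y _ => hψ y) fun y hy =>
      hψ'x.le.trans (hψ'mono hx (mem_Ici.2 (hx.trans hy.le)) hy.le)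
  have := hmono.nonpos_of_integrableOn_sq (hψsq.mono_set (Ioi_subset_Ioi (hpos x hx).le))
  linarith [hψpos x (hpos x hx)]

lemma exists_exp_decay (h : SPsol U U' ψ ψ' E) :
    ∃ C b M : ℝ, 0 < C ∧ 0 < b ∧ ∀ x ∈ Ioi M, |ψ x| ≤ C * Real.exp (-b * x) := by
  obtain ⟨a, ha, hEa⟩ := h.exists_energy_lt_potential
  have hpos : ∀ x ∈ Ici a, 0 < x := fun x hx => lt_of_lt_of_le ha hx
  set b := Real.sqrt (U a - E)
  have hb : 0 < b := Real.sqrt_pos.2 (sub_pos.2 hEa)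
  have hU : ∀ x ∈ Ici a, E + b ^ 2 ≤ U x := fun x hx => by
    rw [Real.sq_sqrt (sub_pos.2 hEa).le]
    linarith [h.monotoneOn_potential ha (hpos x hx) hx]
  have hψ'nonpos := h.deriv_nonpos_of_energy_le ha fun x hx => by nlinarith [hU x hx]
  obtain ⟨-, ⟨hψ, -⟩, hψpos, hψ'', -⟩ := h
  have hψanti : AntitoneOn ψ (Ici a) :=
    antitoneOn_Ici_of_hasDerivAt (fun x _ => hψ x) fun x hx => hψ'nonpos x (mem_Ici.2 hx.le)
  have hsum : ∀ x ∈ Ici a, ψ' x + b * ψ x ≤ 0 := by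
    refine nonpos_of_mul_le_deriv_of_bddAbove hb
      (fun x hx => (hψ'' x (hpos x hx)).add ((hψ x).const_mul b)) (fun x hx => ?_) ?_
    · nlinarith [hU x hx, hψpos x (hpos x hx)]
    · refine ⟨b * ψ a, ?_⟩
      rintro _ ⟨x, hx, rfl⟩
      nlinarith [hψ'nonpos x hx, hψanti self_mem_Ici hx hx]
  refine ⟨ψ a * Real.exp (b * a), b, a, mul_pos (hψpos a ha) (Real.exp_pos _), hb,
    fun x hx => ?_⟩
  rw [abs_of_pos (hψpos x (hpos x (mem_Ici.2 hx.le)))]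
  exact le_exp_mul_of_deriv_add_mul_nonpos (fun x _ => hψ x) hsum x (mem_Ici.2 hx.le)

end SPsol

lemma exists_pos_forall_le_one_div (M : ℝ) : ∃ ε₀ > 0, ∀ ε, 0 < ε → ε < ε₀ → M ≤ 1 / ε := by
  refine ⟨1 / max M 1, by positivity, fun ε hε hεε₀ => ?_⟩
  rw [lt_one_div hε (by positivity)] at hεε₀
  exact (le_max_left M 1).trans hεε₀.le

/-- Exponential decay of the ground state of the half-line Schrödinger–Poisson
problem: `‖ψ₁₀‖_{L²(M,∞)} ≤ a e^{−bM}` for large `M`; in particular with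
`M_ε = 1/ε` for small `ε`. -/
theorem groundstate_exponential_decay (U₀ U₀' ψ₀ ψ₀' : ℝ → ℝ) (E₀ : ℝ)
    (h : SPsol U₀ U₀' ψ₀ ψ₀' E₀) :
    ∃ a b : ℝ, 0 < a ∧ 0 < b ∧
      (∃ M₀ : ℝ, ∀ M : ℝ, M₀ ≤ M →
        Real.sqrt (∫ ξ in Ioi M, (ψ₀ ξ) ^ 2) ≤ a * Real.exp (-b * M)) ∧
      (∃ ε₀ : ℝ, 0 < ε₀ ∧ ∀ ε : ℝ, 0 < ε → ε < ε₀ →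
        Real.sqrt (∫ ξ in Ioi (1 / ε), (ψ₀ ξ) ^ 2) ≤
          a * Real.exp (-b * (1 / ε))) := by
  obtain ⟨C, b, M₀, hC, hb, hdecay⟩ := h.exists_exp_decay
  have htail : ∀ M, M₀ ≤ M →
      Real.sqrt (∫ ξ in Ioi M, (ψ₀ ξ) ^ 2) ≤ C / Real.sqrt (2 * b) * Real.exp (-b * M) :=
    fun M hM => sqrt_integral_sq_Ioi_le_of_abs_le_exp hb fun x hx =>
      hdecay x (lt_of_le_of_lt hM hx)
  obtain ⟨ε₀, hε₀, hε⟩ := exists_pos_forall_le_one_div M₀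
  exact ⟨C / Real.sqrt (2 * b), b, by positivity, hb, ⟨M₀, htail⟩,
    ⟨ε₀, hε₀, fun ε hε0 hεε₀ => htail _ (hε ε hε0 hεε₀)⟩⟩
end
end

section
/- Let V ∈ Ḣ¹₀(ℝ⁺) be such that E₁^∞[V] < liminf_{ξ→+∞} V(ξ), and set V^∞ = liminf_{ξ→+∞} V(ξ). For ε > 0 let I_ε = inf{∫₀^∞ |φ′|² dξ + ∫₀^∞ V φ² dξ : φ ∈ H¹(0,∞), φ(0) = 0, ∫₀^∞ φ² dξ = ε} and I_ε^∞ = inf{∫₀^∞ |φ′|² dξ + V^∞ ∫₀^∞ φ² dξ : φ ∈ H¹(0,∞), φ(0) = 0, ∫₀^∞ φ² dξ = ε}. Then the strict subadditivity inequality I_ε < I_α + I^∞_{ε−α} holds for all 0 < α < ε. -/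
open MeasureTheory Set Filter

noncomputable section

/-- `I_ε = inf { ∫₀^∞ |φ′|² + ∫₀^∞ V φ² : φ ∈ H¹(0,∞), φ(0) = 0, ∫₀^∞ φ² = ε }`. -/
def Iep (V : ℝ → ℝ) (ε : ℝ) : ℝ :=
  sInf {e : ℝ | ∃ φ φd : ℝ → ℝ, (∀ ξ, HasDerivAt φ (φd ξ) ξ) ∧
    IntegrableOn (fun ξ => (φ ξ) ^ 2) (Ioi 0) ∧
    IntegrableOn (fun ξ => (φd ξ) ^ 2) (Ioi 0) ∧
    φ 0 = 0 ∧ (∫ ξ in Ioi (0 : ℝ), (φ ξ) ^ 2) = ε ∧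
    e = (∫ ξ in Ioi (0 : ℝ), (φd ξ) ^ 2) + ∫ ξ in Ioi (0 : ℝ), V ξ * (φ ξ) ^ 2}

/-!
Both infima are linear in the mass: multiplying an admissible `φ` by `√c` multiplies its mass and
its energy by `c`, so `I_ε = ε E₁^∞[V]`. For a constant potential `E₁^∞[v] = v`, since the kinetic
energy of the normalised modes `2 b^{3/2} ξ e^{-bξ}` is `b²`, which tends to `0`. Hence
`I_α + I^∞_{ε-α} - I_ε = (ε - α)(V^∞ - E₁^∞[V]) > 0`.
-/

open Real

lemma integrableOn_pow_mul_exp_neg_mul_Ioi (n : ℕ) {b : ℝ} (hb : 0 < b) :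
    IntegrableOn (fun ξ : ℝ => ξ ^ n * exp (-(b * ξ))) (Ioi 0) := by
  have hn : (-1 : ℝ) < n := by linarith [n.cast_nonneg (α := ℝ)]
  refine (integrableOn_rpow_mul_exp_neg_mul_rpow hn one_pos hb).congr_fun (fun ξ _ => ?_)
    measurableSet_Ioi
  simp [rpow_natCast]

lemma integral_pow_mul_exp_neg_mul_Ioi (n : ℕ) {b : ℝ} (hb : 0 < b) :
    ∫ ξ in Ioi (0 : ℝ), ξ ^ n * exp (-(b * ξ)) = n.factorial / b ^ (n + 1) := by
  have h := integral_rpow_mul_exp_neg_mul_Ioi (a := n + 1) (by positivity) hb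
  rw [add_sub_cancel_right, Gamma_nat_eq_factorial, ← Nat.cast_succ] at h
  simp only [rpow_natCast] at h
  rw [h, Nat.succ_eq_add_one]
  ring

lemma integrableOn_quadratic_mul_exp_neg_mul_Ioi (p q r : ℝ) {b : ℝ} (hb : 0 < b) :
    IntegrableOn (fun ξ : ℝ => (p + q * ξ + r * ξ ^ 2) * exp (-(b * ξ))) (Ioi 0) := by
  have h := (((integrableOn_pow_mul_exp_neg_mul_Ioi 0 hb).const_mul p).add
    ((integrableOn_pow_mul_exp_neg_mul_Ioi 1 hb).const_mul q)).add
    ((integrableOn_pow_mul_exp_neg_mul_Ioi 2 hb).const_mul r)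
  exact IntegrableOn.congr_fun h (fun ξ _ => by simp only [Pi.add_apply]; ring) measurableSet_Ioi

lemma integral_quadratic_mul_exp_neg_mul_Ioi (p q r : ℝ) {b : ℝ} (hb : 0 < b) :
    ∫ ξ in Ioi (0 : ℝ), (p + q * ξ + r * ξ ^ 2) * exp (-(b * ξ))
      = p / b + q / b ^ 2 + 2 * r / b ^ 3 := by
  have i0 := (integrableOn_pow_mul_exp_neg_mul_Ioi 0 hb).const_mul p
  have i1 := (integrableOn_pow_mul_exp_neg_mul_Ioi 1 hb).const_mul q
  have i2 := (integrableOn_pow_mul_exp_neg_mul_Ioi 2 hb).const_mul r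
  rw [setIntegral_congr_fun measurableSet_Ioi fun ξ _ => by
      show _ = p * (ξ ^ 0 * exp (-(b * ξ))) + q * (ξ ^ 1 * exp (-(b * ξ)))
        + r * (ξ ^ 2 * exp (-(b * ξ)))
      ring,
    integral_add _ i2, integral_add i0 i1, integral_const_mul, integral_const_mul,
    integral_const_mul, integral_pow_mul_exp_neg_mul_Ioi 0 hb,
    integral_pow_mul_exp_neg_mul_Ioi 1 hb, integral_pow_mul_exp_neg_mul_Ioi 2 hb]
  · norm_num [Nat.factorial]
    ring
  · exact i0.add i1

def expMode (b ξ : ℝ) : ℝ := 2 * b * √b * (ξ * exp (-(b * ξ)))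

def expModeDeriv (b ξ : ℝ) : ℝ := 2 * b * √b * ((1 - b * ξ) * exp (-(b * ξ)))

lemma hasDerivAt_expMode (b ξ : ℝ) : HasDerivAt (expMode b) (expModeDeriv b ξ) ξ := by
  have h := ((hasDerivAt_id ξ).mul ((hasDerivAt_id ξ).const_mul b).neg.exp).const_mul (2 * b * √b)
  exact h.congr_deriv (by simp only [expModeDeriv, id, Pi.neg_apply]; ring)

lemma exp_neg_mul_sq (b ξ : ℝ) : exp (-(b * ξ)) ^ 2 = exp (-(2 * b * ξ)) := by
  rw [← exp_nat_mul]; ring_nf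

lemma expMode_sq {b : ℝ} (hb : 0 ≤ b) (ξ : ℝ) :
    expMode b ξ ^ 2 = (0 + 0 * ξ + 4 * b ^ 3 * ξ ^ 2) * exp (-(2 * b * ξ)) := by
  rw [expMode, mul_pow, mul_pow, mul_pow, mul_pow, sq_sqrt hb, exp_neg_mul_sq]
  ring

lemma expModeDeriv_sq {b : ℝ} (hb : 0 ≤ b) (ξ : ℝ) :
    expModeDeriv b ξ ^ 2
      = (4 * b ^ 3 + -8 * b ^ 4 * ξ + 4 * b ^ 5 * ξ ^ 2) * exp (-(2 * b * ξ)) := by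
  rw [expModeDeriv, mul_pow, mul_pow, mul_pow, mul_pow, sq_sqrt hb, exp_neg_mul_sq]
  ring

lemma memSinf_expMode {b : ℝ} (hb : 0 < b) : MemSinf (expMode b) (expModeDeriv b) := by
  have hb2 : 0 < 2 * b := by positivity
  refine ⟨hasDerivAt_expMode b, ?_, ?_, by simp [expMode], ?_⟩
  · simpa only [expMode_sq hb.le] using integrableOn_quadratic_mul_exp_neg_mul_Ioi _ _ _ hb2
  · simpa only [expModeDeriv_sq hb.le] using integrableOn_quadratic_mul_exp_neg_mul_Ioi _ _ _ hb2
  · simp only [expMode_sq hb.le]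
    rw [integral_quadratic_mul_exp_neg_mul_Ioi _ _ _ hb2]
    field_simp
    ring

lemma integral_expModeDeriv_sq {b : ℝ} (hb : 0 < b) :
    ∫ ξ in Ioi (0 : ℝ), expModeDeriv b ξ ^ 2 = b ^ 2 := by
  simp only [expModeDeriv_sq hb.le]
  rw [integral_quadratic_mul_exp_neg_mul_Ioi _ _ _ (by positivity)]
  field_simp
  ring

lemma E1inf_const (v : ℝ) : E1inf (fun _ => v) = v := by
  have hJ : ∀ ψ ψ', MemSinf ψ ψ' → Jfun (fun _ => v) ψ ψ' = (∫ ξ in Ioi (0 : ℝ), ψ' ξ ^ 2) + v :=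
    fun ψ ψ' hψ => by rw [Jfun, integral_const_mul, hψ.2.2.2.2, mul_one]
  have hlower : ∀ e ∈ {e : ℝ | ∃ ψ ψ', MemSinf ψ ψ' ∧ Jfun (fun _ => v) ψ ψ' = e}, v ≤ e := by
    rintro e ⟨ψ, ψ', hψ, rfl⟩
    rw [hJ ψ ψ' hψ]
    have hkin : 0 ≤ ∫ ξ in Ioi (0 : ℝ), ψ' ξ ^ 2 := integral_nonneg fun ξ => sq_nonneg (ψ' ξ)
    linarith
  have hmode : ∀ b : ℝ, 0 < b → E1inf (fun _ => v) ≤ b ^ 2 + v := fun b hb =>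
    csInf_le ⟨v, hlower⟩ ⟨_, _, memSinf_expMode hb,
      by rw [hJ _ _ (memSinf_expMode hb), integral_expModeDeriv_sq hb]⟩
  refine le_antisymm (le_of_forall_pos_le_add fun η hη => ?_)
    (le_csInf ⟨_, _, _, memSinf_expMode one_pos, rfl⟩ hlower)
  simpa [sq_sqrt hη.le, add_comm] using hmode (√η) (sqrt_pos.mpr hη)

lemma sq_sqrt_mul {c : ℝ} (hc : 0 ≤ c) (f : ℝ → ℝ) :
    (fun ξ => (√c * f ξ) ^ 2) = fun ξ => c * f ξ ^ 2 := by
  ext ξ; rw [mul_pow, sq_sqrt hc]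

lemma Jfun_sqrt_mul (V : ℝ → ℝ) {c : ℝ} (hc : 0 ≤ c) (φ φd : ℝ → ℝ) :
    Jfun V (fun ξ => √c * φ ξ) (fun ξ => √c * φd ξ) = c * Jfun V φ φd := by
  simp only [Jfun, mul_pow, sq_sqrt hc, mul_left_comm (V _) c, integral_const_mul, mul_add]

lemma Iep_eq_mul_E1inf (V : ℝ → ℝ) {ε : ℝ} (hε : 0 < ε) : Iep V ε = ε * E1inf V := by
  rw [Iep, E1inf, ← smul_eq_mul, ← Real.sInf_smul_of_nonneg hε.le]
  congr 1
  ext e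
  constructor
  · rintro ⟨φ, φd, hd, hφ, hφd, h0, hmass, rfl⟩
    have hc : 0 ≤ ε⁻¹ := by positivity
    refine ⟨_, ⟨fun ξ => √ε⁻¹ * φ ξ, fun ξ => √ε⁻¹ * φd ξ,
      ⟨fun ξ => (hd ξ).const_mul _, ?_, ?_, by simp [h0], ?_⟩, rfl⟩, ?_⟩
    · rw [sq_sqrt_mul hc]; exact hφ.const_mul _
    · rw [sq_sqrt_mul hc]; exact hφd.const_mul _
    · rw [sq_sqrt_mul hc, integral_const_mul, hmass, inv_mul_cancel₀ hε.ne']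
    · show ε * _ = _
      rw [Jfun_sqrt_mul V hc, ← mul_assoc, mul_inv_cancel₀ hε.ne', one_mul, Jfun]
  · rintro ⟨_, ⟨ψ, ψ', ⟨hd, hψ, hψ', h0, hmass⟩, rfl⟩, rfl⟩
    refine ⟨fun ξ => √ε * ψ ξ, fun ξ => √ε * ψ' ξ, fun ξ => (hd ξ).const_mul _, ?_, ?_,
      by simp [h0], ?_, (Jfun_sqrt_mul V hε.le ψ ψ').symm⟩
    · rw [sq_sqrt_mul hε.le]; exact hψ.const_mul _
    · rw [sq_sqrt_mul hε.le]; exact hψ'.const_mul _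
    · rw [sq_sqrt_mul hε.le, integral_const_mul, hmass, mul_one]

theorem strict_subadditivity_general (V : ℝ → ℝ) (Vinf : ℝ)
    (hlt : E1inf V < Vinf) :
    ∀ α ε : ℝ, 0 < α → α < ε →
      Iep V ε < Iep V α + Iep (fun _ => Vinf) (ε - α) := by
  intro α ε hα hαε
  rw [Iep_eq_mul_E1inf V (hα.trans hαε), Iep_eq_mul_E1inf V hα,
    Iep_eq_mul_E1inf _ (sub_pos.mpr hαε), E1inf_const]
  have := mul_lt_mul_of_pos_left hlt (sub_pos.mpr hαε)
  linarith

/-- Strict subadditivity: `I_ε < I_α + I^∞_{ε−α}` for all `0 < α < ε`, where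
`I^∞` is the problem with the constant potential `V^∞ = liminf_{ξ→+∞} V`. -/
theorem strict_subadditivity (V V' : ℝ → ℝ) (hV : MemH1dot V V') (Vinf : ℝ)
    (hVinf : Filter.liminf (fun ξ => (V ξ : EReal)) Filter.atTop = (Vinf : EReal))
    (hlt : E1inf V < Vinf) :
    ∀ α ε : ℝ, 0 < α → α < ε →
      Iep V ε < Iep V α + Iep (fun _ => Vinf) (ε - α) :=
  strict_subadditivity_general V Vinf hlt

end
end
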